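/- arXiv:2005.13321 — 3 statements merged into one kernel-verified Lean document; each statement's English description precedes it below -/
import Mathlib

section
/- Let A, R, Q be n×n real matrices with R and Q positive semidefinite, let g ∈ (0,1) and l₀ ≥ 1 a natural number, and define H(d) = Σ_{i=0}^{d−1} A^i R (A^i)ᵀ and c(d, l) = Σ_{i=d}^{d+l−1} Tr(Q·H(i)). Then, as sums with values in [0,∞]: Σ_{i=1}^∞ (1−g) g^{i−1} c(i·l₀, l₀) ≤ (l₀(1−g)/g²) · Σ_{i=2}^∞ g^{i} Tr(Q·H(i·l₀)). -/
/-! The bound holds term by term. Each increment of `d ↦ Tr(Q H(d))` is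
`Tr(Q Aᵈ R (Aᵈ)ᵀ) ≥ 0`, so this map is monotone and `c(d, l) ≤ l · Tr(Q H(d + l))`;
with `d = (i + 1) l₀` the weights `(1 - g) gⁱ` and `l₀ (1 - g) / g² · g^(i+2)` agree. -/

open Matrix

/-- `covH A R d = ∑_{i=0}^{d-1} Aⁱ R (Aⁱ)ᵀ`, the state covariance matrix at
age-of-information `d`. -/
noncomputable def covH {n : ℕ} (A R : Matrix (Fin n) (Fin n) ℝ) (d : ℕ) :
    Matrix (Fin n) (Fin n) ℝ :=
  ∑ i ∈ Finset.range d, A ^ i * R * (A ^ i)ᵀ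

/-- `stageCost A R Q d l = ∑_{i=d}^{d+l-1} Tr(Q·H(i))`, the one-stage cost of a
packet of length `l` started at age-of-information `d`. -/
noncomputable def stageCost {n : ℕ} (A R Q : Matrix (Fin n) (Fin n) ℝ)
    (d l : ℕ) : ℝ :=
  ∑ i ∈ Finset.Ico d (d + l), (Q * covH A R i).trace

open scoped MatrixOrder ComplexOrder in
theorem Matrix.PosSemidef.trace_mul_nonneg {m 𝕜 : Type*} [Fintype m] [RCLike 𝕜]
    {Q P : Matrix m m 𝕜} (hQ : Q.PosSemidef) (hP : P.PosSemidef) : 0 ≤ (Q * P).trace := by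
  classical
  obtain ⟨B, rfl⟩ := CStarAlgebra.nonneg_iff_eq_star_mul_self.mp hQ.nonneg
  rw [star_eq_conjTranspose, Matrix.mul_assoc, trace_mul_comm]
  exact (hP.mul_mul_conjTranspose_same B).trace_nonneg

section

variable {n : ℕ} {A R Q : Matrix (Fin n) (Fin n) ℝ}

theorem covH_succ (A R : Matrix (Fin n) (Fin n) ℝ) (d : ℕ) :
    covH A R (d + 1) = covH A R d + A ^ d * R * (A ^ d)ᵀ :=
  Finset.sum_range_succ _ _

theorem monotone_trace_mul_covH (hR : R.PosSemidef) (hQ : Q.PosSemidef) :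
    Monotone fun d ↦ (Q * covH A R d).trace :=
  monotone_nat_of_le_succ fun d ↦ by
    rw [covH_succ, Matrix.mul_add, trace_add, le_add_iff_nonneg_right,
      ← conjTranspose_eq_transpose_of_trivial]
    exact hQ.trace_mul_nonneg (hR.mul_mul_conjTranspose_same _)

theorem stageCost_le (hR : R.PosSemidef) (hQ : Q.PosSemidef) (d l : ℕ) :
    stageCost A R Q d l ≤ l * (Q * covH A R (d + l)).trace :=
  calc stageCost A R Q d l ≤ ∑ _i ∈ Finset.Ico d (d + l), (Q * covH A R (d + l)).trace :=
        Finset.sum_le_sum fun _i hi ↦ monotone_trace_mul_covH hR hQ (Finset.mem_Ico.mp hi).2.le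
    _ = l * (Q * covH A R (d + l)).trace := by simp

end

theorem fixed_length_cost_upper_bound_general {n : ℕ}
    (A R Q : Matrix (Fin n) (Fin n) ℝ)
    (hR : R.PosSemidef) (hQ : Q.PosSemidef)
    (g : ℝ) (hg : g ∈ Set.Ioo (0 : ℝ) 1) (l₀ : ℕ) :
    (∑' i : ℕ, ENNReal.ofReal ((1 - g) * g ^ i * stageCost A R Q ((i + 1) * l₀) l₀))
      ≤ ENNReal.ofReal ((l₀ : ℝ) * (1 - g) / g ^ 2) *
        ∑' i : ℕ, ENNReal.ofReal (g ^ (i + 2) * (Q * covH A R ((i + 2) * l₀)).trace) := by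
  obtain ⟨hg0, hg1⟩ := hg
  have h1g : 0 ≤ 1 - g := by linarith
  rw [← ENNReal.tsum_mul_left]
  refine ENNReal.tsum_le_tsum fun i ↦ ?_
  rw [← ENNReal.ofReal_mul (by positivity)]
  refine ENNReal.ofReal_le_ofReal ?_
  calc (1 - g) * g ^ i * stageCost A R Q ((i + 1) * l₀) l₀
      ≤ (1 - g) * g ^ i * (l₀ * (Q * covH A R ((i + 2) * l₀)).trace) := by
        gcongr
        have hend : (i + 1) * l₀ + l₀ = (i + 2) * l₀ := by ring
        exact hend ▸ stageCost_le hR hQ _ _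
    _ = l₀ * (1 - g) / g ^ 2 * (g ^ (i + 2) * (Q * covH A R ((i + 2) * l₀)).trace) := by
        field_simp
        ring

/-- upper bound (18) in the proof of Theorem 1, as sums in `[0,∞]`:
`∑_{i=1}^∞ (1−g) g^(i−1) c(i·l₀, l₀) ≤ (l₀(1−g)/g²) ∑_{i=2}^∞ gⁱ Tr(Q·H(i·l₀))`. -/
theorem fixed_length_cost_upper_bound {n : ℕ}
    (A R Q : Matrix (Fin n) (Fin n) ℝ)
    (hR : R.PosSemidef) (hQ : Q.PosSemidef)
    (g : ℝ) (hg : g ∈ Set.Ioo (0 : ℝ) 1) (l₀ : ℕ) (hl₀ : 1 ≤ l₀) :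
    (∑' i : ℕ, ENNReal.ofReal ((1 - g) * g ^ i * stageCost A R Q ((i + 1) * l₀) l₀))
      ≤ ENNReal.ofReal ((l₀ : ℝ) * (1 - g) / g ^ 2) *
        ∑' i : ℕ, ENNReal.ofReal (g ^ (i + 2) * (Q * covH A R ((i + 2) * l₀)).trace) :=
  fixed_length_cost_upper_bound_general A R Q hR hQ g hg l₀
end

section
/- Let A, R, Q be n×n real matrices with R and Q positive semidefinite, define H(d) = Σ_{i=0}^{d−1} A^i R (A^i)ᵀ, and let ρ(A) denote the spectral radius of A (the maximum modulus of its complex eigenvalues). If q ∈ (0,1) and q·ρ(A)² < 1, then the series Σ_{i=1}^∞ q^i Tr(Q·H(i)) converges. -/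
/-!
By Gelfand's formula, applied to the complexification of `A`, `‖Aᵏ‖ ≤ C rᵏ` for every
`r > ρ(A)`. Choosing `r ≥ 1` with `q r² < 1`, each summand of `H(d)` has norm at most
`‖R‖ C² r²ᵈ`, so the `d`-th term of the series is `O(d (q r²)ᵈ)`, an arithmetico-geometric
series with ratio `< 1`.
-/

open Matrix

/-- The spectral radius of a real matrix: the maximum modulus of its complex
eigenvalues. -/
noncomputable def specRad {n : ℕ} (A : Matrix (Fin n) (Fin n) ℝ) : ℝ :=
  sSup ((fun z : ℂ => ‖z‖) '' spectrum ℂ (A.map Complex.ofReal))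

open Filter Asymptotics
open scoped NNReal ENNReal

theorem eventually_norm_pow_le_pow_of_spectralRadius_lt {𝔸 : Type*} [NormedRing 𝔸]
    [NormedAlgebra ℂ 𝔸] [CompleteSpace 𝔸] {a : 𝔸} {r : ℝ≥0} (hr : spectralRadius ℂ a < r) :
    ∀ᶠ k : ℕ in atTop, ‖a ^ k‖ ≤ r ^ k := by
  have hgelfand := spectrum.pow_nnnorm_pow_one_div_tendsto_nhds_spectralRadius a
  filter_upwards [hgelfand.eventually_lt_const hr, eventually_gt_atTop 0] with k hk hk0
  rw [one_div, ← ENNReal.coe_rpow_of_nonneg _ (by positivity), ENNReal.coe_lt_coe,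
    NNReal.rpow_inv_lt_iff (by positivity), NNReal.rpow_natCast] at hk
  exact_mod_cast hk.le

theorem exists_norm_pow_le_mul_pow_of_spectralRadius_lt {𝔸 : Type*} [NormedRing 𝔸]
    [NormedAlgebra ℂ 𝔸] [CompleteSpace 𝔸] {a : 𝔸} {r : ℝ≥0} (hr0 : 0 < r)
    (hr : spectralRadius ℂ a < r) : ∃ C, ∀ k : ℕ, ‖a ^ k‖ ≤ C * r ^ k := by
  have hO : (fun k : ℕ => a ^ k) =O[atTop] fun k => (r : ℝ) ^ k :=
    .of_bound' <| (eventually_norm_pow_le_pow_of_spectralRadius_lt hr).mono fun k hk => by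
      simpa using hk
  obtain ⟨C, hC⟩ := isBigO_top.1 <| hO.nat_of_atTop <| .of_forall fun k hk =>
    absurd hk (pow_ne_zero k (NNReal.coe_pos.2 hr0).ne')
  exact ⟨C, fun k => by simpa using hC k⟩

theorem spectralRadius_map_ofReal_le_specRad {n : ℕ} (A : Matrix (Fin n) (Fin n) ℝ) :
    spectralRadius ℂ (A.map Complex.ofReal) ≤ ENNReal.ofReal (specRad A) := by
  refine iSup₂_le fun z hz => ?_
  rw [← enorm_eq_nnnorm, ← ofReal_norm]
  exact ENNReal.ofReal_le_ofReal <|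
    le_csSup ((Matrix.finite_spectrum _).image _).bddAbove ⟨z, hz, rfl⟩

theorem specRad_nonneg {n : ℕ} (A : Matrix (Fin n) (Fin n) ℝ) : 0 ≤ specRad A :=
  Real.sSup_nonneg <| by rintro _ ⟨z, -, rfl⟩; exact norm_nonneg z

-- The Frobenius norm is invariant under transposition and under the entrywise embedding `ℝ → ℂ`.
attribute [local instance] Matrix.frobeniusNormedAddCommGroup Matrix.frobeniusNormedRing
  Matrix.frobeniusNormedAlgebra

theorem exists_norm_pow_le_mul_pow_of_specRad_lt {n : ℕ} {A : Matrix (Fin n) (Fin n) ℝ}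
    {r : ℝ} (hr : specRad A < r) : ∃ C, ∀ k : ℕ, ‖A ^ k‖ ≤ C * r ^ k := by
  have hr0 : 0 < r := (specRad_nonneg A).trans_lt hr
  have hlt : spectralRadius ℂ (A.map Complex.ofReal) < r.toNNReal := by
    refine (spectralRadius_map_ofReal_le_specRad A).trans_lt ?_
    exact (ENNReal.ofReal_lt_ofReal_iff hr0).2 hr
  obtain ⟨C, hC⟩ := exists_norm_pow_le_mul_pow_of_spectralRadius_lt (by simpa using hr0) hlt
  refine ⟨C, fun k => ?_⟩
  have hmap : ‖(A ^ k).map Complex.ofReal‖ = ‖A ^ k‖ :=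
    Matrix.frobenius_norm_map_eq _ _ Complex.norm_real
  have hpow : (A ^ k).map Complex.ofReal = A.map Complex.ofReal ^ k :=
    Matrix.map_pow A Complex.ofRealHom k
  rw [← hmap, hpow]
  simpa [hr0.le] using hC k

theorem norm_covH_le {n : ℕ} (A R : Matrix (Fin n) (Fin n) ℝ) (d : ℕ) :
    ‖covH A R d‖ ≤ ‖R‖ * ∑ i ∈ Finset.range d, ‖A ^ i‖ ^ 2 := by
  rw [covH, Finset.mul_sum]
  refine (norm_sum_le _ _).trans (Finset.sum_le_sum fun i _ => ?_)
  calc ‖A ^ i * R * (A ^ i)ᵀ‖ ≤ ‖A ^ i‖ * ‖R‖ * ‖(A ^ i)ᵀ‖ :=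
        (norm_mul_le _ _).trans (mul_le_mul_of_nonneg_right (norm_mul_le _ _) (norm_nonneg _))
    _ = ‖R‖ * ‖A ^ i‖ ^ 2 := by rw [Matrix.frobenius_norm_transpose]; ring

theorem exists_abs_trace_mul_le {n : ℕ} (Q : Matrix (Fin n) (Fin n) ℝ) :
    ∃ c, 0 ≤ c ∧ ∀ M : Matrix (Fin n) (Fin n) ℝ, |(Q * M).trace| ≤ c * ‖M‖ :=
  ⟨_, norm_nonneg _,
    ((Matrix.traceLinearMap _ ℝ ℝ).comp (LinearMap.mulLeft ℝ Q)).toContinuousLinearMap.le_opNorm⟩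

theorem norm_covH_le_mul_pow {n : ℕ} {A R : Matrix (Fin n) (Fin n) ℝ} {C r : ℝ} (hr : 1 ≤ r)
    (hC : ∀ k : ℕ, ‖A ^ k‖ ≤ C * r ^ k) (d : ℕ) :
    ‖covH A R d‖ ≤ ‖R‖ * C ^ 2 * (d * (r ^ 2) ^ d) := by
  have hterm : ∀ i ≤ d, ‖A ^ i‖ ^ 2 ≤ C ^ 2 * (r ^ 2) ^ d := fun i hi =>
    calc ‖A ^ i‖ ^ 2 ≤ (C * r ^ i) ^ 2 := pow_le_pow_left₀ (norm_nonneg _) (hC i) 2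
      _ = C ^ 2 * (r ^ 2) ^ i := by ring
      _ ≤ C ^ 2 * (r ^ 2) ^ d := by gcongr; nlinarith
  calc ‖covH A R d‖ ≤ ‖R‖ * ∑ i ∈ Finset.range d, ‖A ^ i‖ ^ 2 := norm_covH_le A R d
    _ ≤ ‖R‖ * ∑ _i ∈ Finset.range d, C ^ 2 * (r ^ 2) ^ d := by
      gcongr with i hi
      exact hterm i (Finset.mem_range.1 hi).le
    _ = ‖R‖ * C ^ 2 * (d * (r ^ 2) ^ d) := by
      simp only [Finset.sum_const, Finset.card_range, nsmul_eq_mul]; ring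

theorem exists_gt_one_le_mul_sq_lt_one {q ρ : ℝ} (hq : q < 1) (h : q * ρ ^ 2 < 1) :
    ∃ r, ρ < r ∧ 1 ≤ r ∧ q * r ^ 2 < 1 := by
  have hmax : q * max ρ 1 ^ 2 < 1 := by
    rcases le_total ρ 1 with hρ | hρ
    · simpa [max_eq_right hρ] using hq
    · rwa [max_eq_left hρ]
  obtain ⟨r, hr, hqr⟩ := ((continuous_const.mul (continuous_pow 2)).continuousAt.eventually_lt
    continuousAt_const hmax).exists_gt
  exact ⟨r, (le_max_left _ _).trans_lt hr, (le_max_right _ _).trans hr.le, hqr⟩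

theorem discounted_cost_summable_of_lt_one_general {n : ℕ}
    (A R Q : Matrix (Fin n) (Fin n) ℝ)
    (q : ℝ) (hq : q ∈ Set.Ioo (0 : ℝ) 1)
    (hstab : q * specRad A ^ 2 < 1) :
    Summable (fun i : ℕ => q ^ (i + 1) * (Q * covH A R (i + 1)).trace) := by
  obtain ⟨hq0, hq1⟩ := hq
  obtain ⟨r, hAr, hr1, hqr⟩ := exists_gt_one_le_mul_sq_lt_one hq1 hstab
  obtain ⟨C, hC⟩ := exists_norm_pow_le_mul_pow_of_specRad_lt hAr
  obtain ⟨c, hc0, hc⟩ := exists_abs_trace_mul_le Q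
  have hgeom : Summable fun d : ℕ => (d : ℝ) ^ 1 * (q * r ^ 2) ^ d :=
    summable_pow_mul_geometric_of_norm_lt_one 1 <| by
      rwa [Real.norm_of_nonneg (by positivity)]
  refine (summable_nat_add_iff 1 (f := fun d : ℕ => q ^ d * (Q * covH A R d).trace)).2 ?_
  refine .of_norm_bounded (hgeom.mul_left (c * ‖R‖ * C ^ 2)) fun d => ?_
  calc ‖q ^ d * (Q * covH A R d).trace‖ = q ^ d * |(Q * covH A R d).trace| := by
        rw [Real.norm_eq_abs, abs_mul, abs_of_pos (by positivity)]
    _ ≤ q ^ d * (c * (‖R‖ * C ^ 2 * (d * (r ^ 2) ^ d))) := by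
        gcongr
        exact (hc _).trans (by gcongr; exact norm_covH_le_mul_pow hr1 hC d)
    _ = c * ‖R‖ * C ^ 2 * ((d : ℝ) ^ 1 * (q * r ^ 2) ^ d) := by ring

/-- sufficiency direction of property (20): if `q ∈ (0,1)` and
`q·ρ(A)² < 1`, then `∑_{i=1}^∞ qⁱ Tr(Q·H(i))` converges. -/
theorem discounted_cost_summable_of_lt_one {n : ℕ}
    (A R Q : Matrix (Fin n) (Fin n) ℝ)
    (hR : R.PosSemidef) (hQ : Q.PosSemidef)
    (q : ℝ) (hq : q ∈ Set.Ioo (0 : ℝ) 1)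
    (hstab : q * specRad A ^ 2 < 1) :
    Summable (fun i : ℕ => q ^ (i + 1) * (Q * covH A R (i + 1)).trace) :=
  discounted_cost_summable_of_lt_one_general A R Q q hq hstab
end

section
/- Let A, R, Q be n×n real matrices with R and Q positive definite, define H(d) = Σ_{i=0}^{d−1} A^i R (A^i)ᵀ, and let ρ(A) denote the spectral radius of A (the maximum modulus of its complex eigenvalues). Then for any q ∈ (0,1), the series Σ_{i=1}^∞ q^i Tr(Q·H(i)) converges if and only if q·ρ(A)² < 1. -/
open Matrix

/-! Write `Q = S²`, `R = T²` with `S, T` the positive square roots. Then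
`Tr(Q Aⁱ R (Aⁱ)ᵀ) = ‖S Aⁱ T‖²` in the Frobenius norm, which is comparable to `‖Aⁱ‖²` because `S`
and `T` are invertible. As `q < 1`, passing from the increments to the partial sums `H(i + 1)`
only convolves with a geometric sequence, so the series converges iff `∑ qⁱ ‖Aⁱ‖²` does. By
Gelfand's formula `‖Aⁱ‖ ≤ sⁱ` eventually for every `s > ρ(A)`, which gives convergence when
`q ρ(A)² < 1`; conversely `ρ(A)ⁱ ≤ ‖Aⁱ‖ ‖1‖` because `zⁱ` is an eigenvalue of `Aⁱ` for every
eigenvalue `z` of `A`, so the terms stay bounded away from `0` when `q ρ(A)² ≥ 1`. -/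

open Filter Topology Finset

theorem summable_pow_succ_mul_sum_range_succ_iff {c : ℕ → ℝ} (hc : ∀ i, 0 ≤ c i) {q : ℝ}
    (hq0 : 0 < q) (hq1 : q < 1) :
    (Summable fun i : ℕ => q ^ (i + 1) * ∑ j ∈ range (i + 1), c j) ↔
      Summable fun i : ℕ => q ^ i * c i := by
  constructor
  · intro h
    have hsucc : Summable fun i : ℕ => q ^ (i + 1) * c i :=
      h.of_nonneg_of_le (fun i => mul_nonneg (by positivity) (hc i)) fun i =>
        mul_le_mul_of_nonneg_left (single_le_sum (fun j _ => hc j) (self_mem_range_succ i))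
          (by positivity)
    refine (hsucc.mul_left q⁻¹).congr fun i => ?_
    rw [pow_succ]
    field_simp
  · intro h
    have hgeom : Summable fun i : ℕ => q ^ (i + 1) :=
      (summable_nat_add_iff 1).mpr (summable_geometric_of_lt_one hq0.le hq1)
    -- `q ^ (i + 1) * ∑_{j ≤ i} c j` is the Cauchy product of `q ^ j * c j` and `q ^ (k + 1)`.
    have hcauchy := summable_sum_mul_range_of_summable_mul
      (f := fun j => q ^ j * c j) (g := fun k => q ^ (k + 1)) <|
        h.mul_of_nonneg hgeom (fun i => mul_nonneg (pow_nonneg hq0.le i) (hc i))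
          (fun i => pow_nonneg hq0.le (i + 1))
    refine hcauchy.congr fun i => ?_
    rw [mul_sum]
    refine sum_congr rfl fun j hj => ?_
    rw [show i + 1 = j + (i - j + 1) by have := mem_range_succ_iff.mp hj; omega, pow_add]
    ring

section NormedRing

variable {𝔸 : Type*} [NormedRing 𝔸]

theorem Summable.mul_norm_mul_mul_sq {w : ℕ → ℝ} (hw : ∀ i, 0 ≤ w i) {x : ℕ → 𝔸}
    (h : Summable fun i => w i * ‖x i‖ ^ 2) (a b : 𝔸) :
    Summable fun i => w i * ‖a * x i * b‖ ^ 2 := by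
  refine (h.mul_left ((‖a‖ * ‖b‖) ^ 2)).of_nonneg_of_le
    (fun i => mul_nonneg (hw i) (by positivity)) fun i => ?_
  calc w i * ‖a * x i * b‖ ^ 2 ≤ w i * (‖a‖ * ‖x i‖ * ‖b‖) ^ 2 := by
        gcongr
        · exact hw i
        · exact norm_mul₃_le
    _ = (‖a‖ * ‖b‖) ^ 2 * (w i * ‖x i‖ ^ 2) := by ring

theorem summable_mul_norm_mul_mul_sq_iff {w : ℕ → ℝ} (hw : ∀ i, 0 ≤ w i) (x : ℕ → 𝔸)
    {a b : 𝔸} (ha : IsUnit a) (hb : IsUnit b) :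
    (Summable fun i => w i * ‖a * x i * b‖ ^ 2) ↔ Summable fun i => w i * ‖x i‖ ^ 2 := by
  obtain ⟨a, rfl⟩ := ha
  obtain ⟨b, rfl⟩ := hb
  refine ⟨fun h => ?_, fun h => h.mul_norm_mul_mul_sq hw _ _⟩
  simpa [mul_assoc] using h.mul_norm_mul_mul_sq hw ↑a⁻¹ ↑b⁻¹

variable [CompleteSpace 𝔸]

theorem spectrum.norm_pow_le_norm_pow_mul {𝕜 : Type*} [NormedField 𝕜] [NormedAlgebra 𝕜 𝔸]
    {a : 𝔸} {z : 𝕜} (hz : z ∈ spectrum 𝕜 a) (i : ℕ) : ‖z‖ ^ i ≤ ‖a ^ i‖ * ‖(1 : 𝔸)‖ := by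
  simpa only [norm_pow] using
    spectrum.norm_le_norm_mul_of_mem (spectrum.pow_image_subset a i ⟨z, hz, rfl⟩)

variable [NormedAlgebra ℂ 𝔸]

theorem spectrum.eventually_norm_pow_le (a : 𝔸) {s : ℝ}
    (hs : spectralRadius ℂ a < ENNReal.ofReal s) : ∀ᶠ i in atTop, ‖a ^ i‖ ≤ s ^ i := by
  filter_upwards [(spectrum.pow_norm_pow_one_div_tendsto_nhds_spectralRadius a).eventually_lt_const
    hs, eventually_ne_atTop 0] with i hi hi0
  have hroot : ‖a ^ i‖ ^ (1 / i : ℝ) ≤ s := (ENNReal.ofReal_lt_ofReal_iff'.mp hi).1.le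
  calc ‖a ^ i‖ = (‖a ^ i‖ ^ (1 / i : ℝ)) ^ i := by
        rw [one_div, Real.rpow_inv_natCast_pow (norm_nonneg _) hi0]
    _ ≤ s ^ i := by gcongr

theorem summable_geometric_mul_norm_pow_sq_iff (a : 𝔸) {q : ℝ} (hq : 0 < q) :
    (Summable fun i : ℕ => q ^ i * ‖a ^ i‖ ^ 2) ↔
      q * sSup ((fun z : ℂ => ‖z‖) '' spectrum ℂ a) ^ 2 < 1 := by
  set ρ := sSup ((fun z : ℂ => ‖z‖) '' spectrum ℂ a)
  have hcompact := (spectrum.isCompact (𝕜 := ℂ) a).image continuous_norm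
  constructor
  · intro h
    by_contra! hqρ
    obtain ⟨z, hz, hzρ⟩ : ρ ∈ (fun z : ℂ => ‖z‖) '' spectrum ℂ a := by
      refine hcompact.sSup_mem (Set.nonempty_iff_ne_empty.mpr fun he => ?_)
      norm_num [ρ, he] at hqρ
    refine absurd (ge_of_tendsto' (h.mul_right (‖(1 : 𝔸)‖ ^ 2)).tendsto_atTop_zero fun i => ?_)
      zero_lt_one.not_ge
    calc (1 : ℝ) ≤ (q * ρ ^ 2) ^ i := one_le_pow₀ hqρ
      _ = q ^ i * (‖z‖ ^ i) ^ 2 := by rw [← hzρ]; ring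
      _ ≤ q ^ i * (‖a ^ i‖ * ‖(1 : 𝔸)‖) ^ 2 := by
        gcongr
        exact spectrum.norm_pow_le_norm_pow_mul hz i
      _ = q ^ i * ‖a ^ i‖ ^ 2 * ‖(1 : 𝔸)‖ ^ 2 := by ring
  · intro h
    have hρ0 : 0 ≤ ρ := Real.sSup_nonneg (by rintro _ ⟨z, -, rfl⟩; exact norm_nonneg z)
    obtain ⟨s, hs, hρs⟩ : ∃ s, q * s ^ 2 < 1 ∧ ρ < s :=
      (((by fun_prop : Continuous fun s : ℝ => q * s ^ 2).tendsto ρ).mono_left nhdsWithin_le_nhds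
        |>.eventually_lt_const h |>.and (self_mem_nhdsWithin : Set.Ioi ρ ∈ 𝓝[>] ρ)).exists
    have hradius : spectralRadius ℂ a < ENNReal.ofReal s := by
      refine lt_of_le_of_lt (iSup₂_le fun z hz => ?_)
        (ENNReal.ofReal_lt_ofReal_iff'.mpr ⟨hρs, hρ0.trans_lt hρs⟩)
      rw [← ENNReal.ofReal_coe_nnreal, coe_nnnorm]
      exact ENNReal.ofReal_le_ofReal (le_csSup hcompact.bddAbove ⟨z, hz, rfl⟩)
    have hgeom := summable_geometric_of_lt_one (by positivity) hs
    refine hgeom.of_norm_bounded_eventually_nat ?_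
    filter_upwards [spectrum.eventually_norm_pow_le a hradius] with i hi
    rw [Real.norm_of_nonneg (by positivity), mul_pow, ← pow_mul, mul_comm 2, pow_mul]
    gcongr

end NormedRing

attribute [local instance] Matrix.frobeniusNormedAddCommGroup Matrix.frobeniusNormedRing
  Matrix.frobeniusNormedAlgebra

open scoped MatrixOrder

namespace Matrix

variable {m n : Type*} [Fintype m] [Fintype n]

theorem trace_mul_transpose_self_eq_frobenius_norm_sq (B : Matrix m n ℝ) :
    (B * Bᵀ).trace = ‖B‖ ^ 2 := by
  rw [frobenius_norm_def, ← Real.sqrt_eq_rpow, Real.sq_sqrt (by positivity)]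
  simp [trace, mul_apply, sq]

theorem transpose_cfcSqrt [DecidableEq n] (M : Matrix n n ℝ) : (CFC.sqrt M)ᵀ = CFC.sqrt M := by
  simpa [IsHermitian, conjTranspose_eq_transpose_of_trivial] using
    (nonneg_iff_posSemidef.mp (CFC.sqrt_nonneg M)).isHermitian

theorem trace_mul_mul_mul_transpose_eq_norm_sq [DecidableEq m] [DecidableEq n]
    {Q : Matrix m m ℝ} {R : Matrix n n ℝ} (hQ : Q.PosSemidef) (hR : R.PosSemidef)
    (X : Matrix m n ℝ) :
    (Q * (X * R * Xᵀ)).trace = ‖CFC.sqrt Q * X * CFC.sqrt R‖ ^ 2 := by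
  rw [← trace_mul_transpose_self_eq_frobenius_norm_sq, transpose_mul, transpose_mul,
    transpose_cfcSqrt, transpose_cfcSqrt]
  conv_lhs => rw [← CFC.sqrt_mul_sqrt_self Q hQ.nonneg, ← CFC.sqrt_mul_sqrt_self R hR.nonneg]
  rw [Matrix.mul_assoc (CFC.sqrt Q), trace_mul_comm (CFC.sqrt Q)]
  simp only [Matrix.mul_assoc]

end Matrix

open Matrix

theorem trace_mul_covH {n : ℕ} (Q A R : Matrix (Fin n) (Fin n) ℝ) (d : ℕ) :
    (Q * covH A R d).trace = ∑ i ∈ range d, (Q * (A ^ i * R * (A ^ i)ᵀ)).trace := by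
  rw [covH, mul_sum, trace_sum]

/-- property (20) of the paper: for `R, Q` positive definite and
`q ∈ (0,1)`, the series `∑_{i=1}^∞ qⁱ Tr(Q·H(i))` converges iff `q·ρ(A)² < 1`. -/
theorem discounted_cost_summable_iff {n : ℕ}
    (A R Q : Matrix (Fin n) (Fin n) ℝ)
    (hR : R.PosDef) (hQ : Q.PosDef)
    (q : ℝ) (hq : q ∈ Set.Ioo (0 : ℝ) 1) :
    Summable (fun i : ℕ => q ^ (i + 1) * (Q * covH A R (i + 1)).trace) ↔
      q * specRad A ^ 2 < 1 := by
  obtain ⟨hq0, hq1⟩ := hq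
  have hS : IsUnit (CFC.sqrt Q) := (CFC.isUnit_sqrt_iff Q hQ.posSemidef.nonneg).mpr hQ.isUnit
  have hT : IsUnit (CFC.sqrt R) := (CFC.isUnit_sqrt_iff R hR.posSemidef.nonneg).mpr hR.isUnit
  simp_rw [trace_mul_covH, trace_mul_mul_mul_transpose_eq_norm_sq hQ.posSemidef hR.posSemidef]
  rw [summable_pow_succ_mul_sum_range_succ_iff (fun _ => sq_nonneg _) hq0 hq1,
    summable_mul_norm_mul_mul_sq_iff (fun i => pow_nonneg hq0.le i) _ hS hT]
  have hcomplexify (i : ℕ) : ‖A ^ i‖ = ‖A.map Complex.ofReal ^ i‖ := by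
    rw [show A.map Complex.ofReal = A.map Complex.ofRealHom from rfl, ← Matrix.map_pow]
    exact (frobenius_norm_map_eq _ _ fun a => Complex.norm_real a).symm
  simp_rw [hcomplexify]
  exact summable_geometric_mul_norm_pow_sq_iff _ hq0
end
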